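/- Consider the implicit equation z = S·φ(z) + b where z ∈ ℝⁿ is partitioned into n scalar components, S ∈ ℝⁿˣⁿ, φ acts componentwise, and b ∈ ℝⁿ. If the dependency graph with an edge from j to i whenever S i j ≠ 0 is acyclic (admits a topological ordering), then for every b and every family of functions φᵢ : ℝ → ℝ, the equation z = S·φ(z) + b has a unique solution z. -/
import Mathlib


theorem implicit_eq_unique_solution_of_acyclic {n : ℕ} (S : Matrix (Fin n) (Fin n) ℝ)
    (ord : Fin n → ℕ) (hinj : Function.Injective ord)
    (htopo : ∀ i j, S i j ≠ 0 → ord j < ord i)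
    (b : Fin n → ℝ) (φ : Fin n → ℝ → ℝ) :
    ∃! z : Fin n → ℝ, ∀ i, z i = (∑ j, S i j * φ j (z j)) + b i := by
  have hwf : WellFounded (fun j i : Fin n => ord j < ord i) :=
    InvImage.wf ord Nat.lt_wfRel.wf
  set F : (i : Fin n) → ((j : Fin n) → ord j < ord i → ℝ) → ℝ :=
    fun i rec =>
      (∑ j, if h : S i j = 0 then 0 else S i j * φ j (rec j (htopo i j h))) + b i with hF
  set z : Fin n → ℝ := hwf.fix F with hz
  have hzeq : ∀ i, z i = (∑ j, S i j * φ j (z j)) + b i := by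
    intro i
    rw [hz, hwf.fix_eq, hF]
    simp only
    congr 1
    apply Finset.sum_congr rfl
    intro j _
    split
    · simp [*]
    · rfl
  refine ⟨z, hzeq, ?_⟩
  intro w hw
  funext i
  induction i using hwf.induction with
  | _ i ih =>
    rw [hw i, hzeq i]
    congr 1
    apply Finset.sum_congr rfl
    intro j _
    by_cases h : S i j = 0
    · simp [h]
    · rw [ih j (htopo i j h)]
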